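/- arXiv:math/0007108 — 2 statements merged into one kernel-verified Lean document; each statement's English description precedes it below -/
import Mathlib

section
/- Let α be a real number, τ in the complex upper half-plane, x, z ∈ ℂ, and let n be an integer such that n·α ∈ ℤ. Then, whenever all theta values appearing in the denominators are nonzero, Ψ(x, α, z + n, τ) = Ψ(x, α, z, τ) and Ψ(x, α, z + nτ, τ) = exp(n·α·x) · Ψ(x, α, z, τ). -/
open Complex Real

/-- The Jacobi theta function, defined by the triple product
`θ(z,τ) = exp(πiτ/4) · 2 sin(πz) · ∏_{l≥1} (1-q^l)(1-q^l e^{2πiz})(1-q^l e^{-2πiz})`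
where `q = exp(2πiτ)`. -/
noncomputable def jacobiThetaProd (z τ : ℂ) : ℂ :=
  Complex.exp ((π : ℂ) * I * τ / 4) * (2 * Complex.sin ((π : ℂ) * z)) *
    ∏' l : ℕ,
      (1 - Complex.exp (2 * (π : ℂ) * I * τ) ^ (l + 1)) *
      (1 - Complex.exp (2 * (π : ℂ) * I * τ) ^ (l + 1) * Complex.exp (2 * (π : ℂ) * I * z)) *
      (1 - Complex.exp (2 * (π : ℂ) * I * τ) ^ (l + 1) * Complex.exp (-(2 * (π : ℂ) * I * z)))

/-- `Ψ(x,α,z,τ) = θ(x/(2πi) − (α+1)z, τ)·θ(−z, τ) / (θ(x/(2πi) − z, τ)·θ(−(α+1)z, τ))`. -/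
noncomputable def PsiFun (x : ℂ) (α : ℝ) (z τ : ℂ) : ℂ :=
  jacobiThetaProd (x / (2 * (π : ℂ) * I) - ((α : ℂ) + 1) * z) τ * jacobiThetaProd (-z) τ /
    (jacobiThetaProd (x / (2 * (π : ℂ) * I) - z) τ *
      jacobiThetaProd (-(((α : ℂ) + 1) * z)) τ)


/-! Both quasi-periodicities of `Ψ` are inherited from those of `θ`: for `k ∈ ℤ`,
`θ(z + k) = e^{πik} θ(z)` and `θ(z + kτ) = e^{πik − πik²τ − 2πikz} θ(z)`, the second obtained from
the triple product by peeling one factor off each of two `q`-Pochhammer symbols.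
Because `nα = m ∈ ℤ`, shifting `z` by `n` (resp. `nτ`) shifts the four theta arguments of `Ψ` by
`−(m+n)`, `−n`, `−n`, `−(m+n)` times `1` (resp. `τ`), so the multipliers in numerator and
denominator come in matching pairs. They cancel outright for the shift by `n`; for the shift by
`nτ` only the terms linear in the arguments survive, leaving `e^{(m+n)x − nx} = e^{nαx}`. -/

noncomputable def qPochhammer (a q : ℂ) : ℂ := ∏' l : ℕ, (1 - a * q ^ l)

section qPochhammer

variable {q : ℂ}

lemma multipliable_one_sub_mul_pow (hq : ‖q‖ < 1) (a : ℂ) :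
    Multipliable fun l : ℕ => 1 - a * q ^ l := by
  simpa [sub_eq_add_neg] using Complex.multipliable_one_add_of_summable
    ((summable_geometric_of_norm_lt_one hq).mul_left a).neg

lemma qPochhammer_eq_one_sub_mul (hq : ‖q‖ < 1) (a : ℂ) :
    qPochhammer a q = (1 - a) * qPochhammer (q * a) q := by
  rw [qPochhammer, tprod_eq_zero_mul' ((multipliable_one_sub_mul_pow hq (q * a)).congr
    fun l => by ring), pow_zero, mul_one, qPochhammer]
  exact congrArg _ (tprod_congr fun l => by ring)

end qPochhammer

lemma add_int_mul_eq_exp_mul_of_add_eq_exp_mul {f : ℂ → ℂ} {w a b : ℂ}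
    (h : ∀ z, f (z + w) = cexp (a + b * z) * f z) (k : ℤ) (z : ℂ) :
    f (z + k * w) = cexp (k * a + k * (k - 1) / 2 * b * w + k * b * z) * f z := by
  induction k using Int.induction_on with
  | zero => simp
  | succ k ih =>
    rw [show z + ((k + 1 : ℤ) : ℂ) * w = z + ((k : ℤ) : ℂ) * w + w by push_cast; ring, h, ih,
      ← mul_assoc, ← Complex.exp_add]
    congr 2
    push_cast
    ring
  | pred k ih =>
    have hstep := h (z + ((-k - 1 : ℤ) : ℂ) * w)
    rw [show z + ((-k - 1 : ℤ) : ℂ) * w + w = z + ((-k : ℤ) : ℂ) * w by push_cast; ring,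
      ih] at hstep
    refine mul_left_cancel₀ (Complex.exp_ne_zero (a + b * (z + ((-k - 1 : ℤ) : ℂ) * w))) ?_
    rw [← hstep, ← mul_assoc, ← Complex.exp_add]
    congr 2
    push_cast
    ring

lemma sin_pi_add_mul_one_sub_inv_exp (z τ : ℂ) :
    Complex.sin (π * (z + τ)) * (1 - (cexp (2 * π * I * z))⁻¹) =
      cexp (π * I - π * I * τ - 2 * π * I * z) * Complex.sin (π * z) *
        (1 - cexp (2 * π * I * τ) * cexp (2 * π * I * z)) := by
  have hsq (w : ℂ) : cexp (w * 2) = cexp w ^ 2 := by rw [sq, ← Complex.exp_add, mul_two]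
  have hz := Complex.exp_ne_zero (π * z * I)
  have hτ := Complex.exp_ne_zero (π * τ * I)
  simp only [Complex.sin]
  ring_nf
  simp only [Complex.exp_add, Complex.exp_sub, Complex.exp_neg, hsq, Complex.exp_pi_mul_I]
  field_simp
  ring

section jacobiThetaProd

variable {τ : ℂ}

lemma jacobiThetaProd_eq_qPochhammer (hτ : 0 < τ.im) (z : ℂ) :
    jacobiThetaProd z τ =
      cexp (π * I * τ / 4) * (2 * Complex.sin (π * z)) *
        (qPochhammer (cexp (2 * π * I * τ)) (cexp (2 * π * I * τ)) *
          qPochhammer (cexp (2 * π * I * τ) * cexp (2 * π * I * z)) (cexp (2 * π * I * τ)) *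
          qPochhammer (cexp (2 * π * I * τ) * (cexp (2 * π * I * z))⁻¹)
            (cexp (2 * π * I * τ))) := by
  have hq : ‖cexp (2 * π * I * τ)‖ < 1 := UpperHalfPlane.norm_exp_two_pi_I_lt_one ⟨τ, hτ⟩
  set q := cexp (2 * π * I * τ)
  have hmul (c : ℂ) : Multipliable fun l : ℕ => 1 - q ^ (l + 1) * c :=
    (multipliable_one_sub_mul_pow hq (q * c)).congr fun l => by ring
  have hmul₁ : Multipliable fun l : ℕ => 1 - q ^ (l + 1) := by simpa using hmul 1
  have hfac (c : ℂ) : qPochhammer (q * c) q = ∏' l : ℕ, (1 - q ^ (l + 1) * c) :=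
    tprod_congr fun l => by ring
  have hfac₁ : qPochhammer q q = ∏' l : ℕ, (1 - q ^ (l + 1)) := tprod_congr fun l => by ring
  rw [hfac₁, hfac, hfac, ← hmul₁.tprod_mul (hmul _), ← (hmul₁.mul (hmul _)).tprod_mul (hmul _),
    jacobiThetaProd, Complex.exp_neg]

lemma jacobiThetaProd_add_one (z : ℂ) : jacobiThetaProd (z + 1) τ = -jacobiThetaProd z τ := by
  have hexp : cexp (2 * π * I * (z + 1)) = cexp (2 * π * I * z) := by
    rw [mul_add, mul_one, Complex.exp_add, Complex.exp_two_pi_mul_I, mul_one]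
  have hsin : Complex.sin (π * (z + 1)) = -Complex.sin (π * z) := by
    rw [mul_add, mul_one, Complex.sin_add_pi]
  rw [jacobiThetaProd, jacobiThetaProd, Complex.exp_neg, Complex.exp_neg, hexp, hsin]
  ring

lemma jacobiThetaProd_add_tau (hτ : 0 < τ.im) (z : ℂ) :
    jacobiThetaProd (z + τ) τ = cexp (π * I - π * I * τ - 2 * π * I * z) * jacobiThetaProd z τ := by
  have hq : ‖cexp (2 * π * I * τ)‖ < 1 := UpperHalfPlane.norm_exp_two_pi_I_lt_one ⟨τ, hτ⟩
  have hshift : cexp (2 * π * I * (z + τ)) = cexp (2 * π * I * τ) * cexp (2 * π * I * z) := by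
    rw [← Complex.exp_add]
    ring_nf
  rw [jacobiThetaProd_eq_qPochhammer hτ, jacobiThetaProd_eq_qPochhammer hτ, hshift]
  set q := cexp (2 * π * I * τ)
  set ζ := cexp (2 * π * I * z)
  -- `ζ ↦ qζ` moves the factor `1 - qζ` out of `(qζ; q)_∞` and `1 - ζ⁻¹` into `(ζ⁻¹; q)_∞`;
  -- the sine factor absorbs the difference.
  rw [mul_inv, mul_inv_cancel_left₀ (Complex.exp_ne_zero _), qPochhammer_eq_one_sub_mul hq (q * ζ),
    qPochhammer_eq_one_sub_mul hq ζ⁻¹]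
  linear_combination (2 * cexp (π * I * τ / 4) * qPochhammer q q *
    qPochhammer (q * (q * ζ)) q * qPochhammer (q * ζ⁻¹) q) * sin_pi_add_mul_one_sub_inv_exp z τ

lemma jacobiThetaProd_add_int (k : ℤ) (z : ℂ) :
    jacobiThetaProd (z + k) τ = cexp (π * I * k) * jacobiThetaProd z τ := by
  have h := add_int_mul_eq_exp_mul_of_add_eq_exp_mul (f := (jacobiThetaProd · τ)) (w := 1)
    (a := π * I) (b := 0) (fun u => by simp [jacobiThetaProd_add_one, Complex.exp_pi_mul_I]) k z
  simpa [mul_comm] using h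

lemma jacobiThetaProd_add_int_mul_tau (hτ : 0 < τ.im) (k : ℤ) (z : ℂ) :
    jacobiThetaProd (z + k * τ) τ =
      cexp (π * I * k - π * I * k ^ 2 * τ - 2 * π * I * k * z) * jacobiThetaProd z τ := by
  rw [add_int_mul_eq_exp_mul_of_add_eq_exp_mul (f := (jacobiThetaProd · τ))
    (a := π * I - π * I * τ) (b := -2 * π * I)
    (fun u => by rw [jacobiThetaProd_add_tau hτ]; ring_nf) k z]
  ring_nf

end jacobiThetaProd

lemma exp_mul_mul_exp_mul_div (a b c d p q r s : ℂ) :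
    cexp a * p * (cexp b * q) / (cexp c * r * (cexp d * s)) =
      cexp (a + b - (c + d)) * (p * q / (r * s)) := by
  rw [Complex.exp_sub, Complex.exp_add, Complex.exp_add]
  ring

lemma PsiFun_add_int_mul (x : ℂ) {α : ℝ} {n m : ℤ} (hnm : (n : ℂ) * α = m) (z s τ : ℂ) :
    PsiFun x α (z + n * s) τ =
      jacobiThetaProd (x / (2 * π * I) - (α + 1) * z + (-(m + n) : ℤ) * s) τ *
          jacobiThetaProd (-z + (-n : ℤ) * s) τ /
        (jacobiThetaProd (x / (2 * π * I) - z + (-n : ℤ) * s) τ *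
          jacobiThetaProd (-((α + 1) * z) + (-(m + n) : ℤ) * s) τ) := by
  rw [PsiFun]
  congr 3 <;> push_cast
  · linear_combination (-s) * hnm
  · ring
  · ring
  · linear_combination (-s) * hnm

theorem Psi_quasi_periodic_general (α : ℝ) (τ : ℂ) (hτ : 0 < τ.im) (x z : ℂ) (n : ℤ)
    (hnα : ∃ m : ℤ, (n : ℝ) * α = (m : ℝ)) :
    PsiFun x α (z + (n : ℂ)) τ = PsiFun x α z τ ∧
    PsiFun x α (z + (n : ℂ) * τ) τ =
      Complex.exp ((n : ℂ) * (α : ℂ) * x) * PsiFun x α z τ := by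
  obtain ⟨m, hm⟩ := hnα
  have hnm : (n : ℂ) * α = m := by exact_mod_cast hm
  constructor
  · have h := PsiFun_add_int_mul x hnm z 1 τ
    simp only [mul_one] at h
    rw [h, jacobiThetaProd_add_int, jacobiThetaProd_add_int, jacobiThetaProd_add_int,
      jacobiThetaProd_add_int, exp_mul_mul_exp_mul_div, PsiFun]
    convert one_mul _ using 2
    rw [← Complex.exp_zero]
    ring_nf
  · rw [PsiFun_add_int_mul x hnm, jacobiThetaProd_add_int_mul_tau hτ,
      jacobiThetaProd_add_int_mul_tau hτ, jacobiThetaProd_add_int_mul_tau hτ,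
      jacobiThetaProd_add_int_mul_tau hτ, exp_mul_mul_exp_mul_div, PsiFun]
    congr 2
    have hπI : (π : ℂ) * I ≠ 0 := mul_ne_zero (by exact_mod_cast Real.pi_ne_zero) I_ne_zero
    push_cast
    field_simp
    linear_combination (-x) * hnm

/-- Quasi-periodicities of the exceptional-divisor factor `Ψ` of the singular elliptic genus:
if `n·α ∈ ℤ` then `Ψ(x,α,z+n,τ) = Ψ(x,α,z,τ)` and `Ψ(x,α,z+nτ,τ) = e^{nαx}·Ψ(x,α,z,τ)`. -/
theorem Psi_quasi_periodic (α : ℝ) (τ : ℂ) (hτ : 0 < τ.im) (x z : ℂ) (n : ℤ)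
    (hnα : ∃ m : ℤ, (n : ℝ) * α = (m : ℝ))
    (hd1 : jacobiThetaProd (x / (2 * (π : ℂ) * I) - z) τ ≠ 0)
    (hd2 : jacobiThetaProd (-(((α : ℂ) + 1) * z)) τ ≠ 0)
    (hd3 : jacobiThetaProd (x / (2 * (π : ℂ) * I) - (z + (n : ℂ))) τ ≠ 0)
    (hd4 : jacobiThetaProd (-(((α : ℂ) + 1) * (z + (n : ℂ)))) τ ≠ 0)
    (hd5 : jacobiThetaProd (x / (2 * (π : ℂ) * I) - (z + (n : ℂ) * τ)) τ ≠ 0)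
    (hd6 : jacobiThetaProd (-(((α : ℂ) + 1) * (z + (n : ℂ) * τ))) τ ≠ 0) :
    PsiFun x α (z + (n : ℂ)) τ = PsiFun x α z τ ∧
    PsiFun x α (z + (n : ℂ) * τ) τ =
      Complex.exp ((n : ℂ) * (α : ℂ) * x) * PsiFun x α z τ :=
  Psi_quasi_periodic_general α τ hτ x z n hnα
end

section
/- Let α be a real number and x, z ∈ ℂ. Set u := exp(2πi·z) and write u^{α+1} for exp(2πi·(α+1)·z). Assume u ≠ 1, u^{α+1} ≠ 1, exp(x) ≠ u and exp(x) ≠ u^{α+1}. Then, as Im τ → +∞ (τ in the upper half-plane), Ψ(x, α, z, τ) tends to (u − 1)·(1 − u^{α+1}·exp(−x)) / ((u^{α+1} − 1)·(1 − u·exp(−x))). -/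
/-!
Write `θ(w,τ) = -i e^{πiτ/4} e^{-πiw} (e^{2πiw} - 1) T(w,τ)` with `T` the triple product. As
`Im τ → ∞` we have `q = e^{2πiτ} → 0`, and `T(w,·) → 1` by dominated convergence for infinite
products. The four arguments of `θ` in `Ψ` satisfy `w₁ + w₂ = w₃ + w₄`, so the prefactors cancel
and `Ψ → (e(w₁) - 1)(e(w₂) - 1) / ((e(w₃) - 1)(e(w₄) - 1))` with `e(w) = e^{2πiw}`. Here
`e(w₁) = eˣ u^{-(α+1)}`, `e(w₂) = u⁻¹`, `e(w₃) = eˣ u⁻¹`, `e(w₄) = u^{-(α+1)}`, and cancelling the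
common factor `-eˣ u⁻¹ u^{-(α+1)}` gives the stated limit.
-/

open Complex Real

open Filter Topology

section InfiniteProducts

variable {R : Type*} [NormedCommRing R] [NormOneClass R]

lemma norm_pow_succ_mul_le (q c : R) (n : ℕ) : ‖q ^ (n + 1) * c‖ ≤ ‖c‖ * ‖q‖ ^ (n + 1) :=
  (norm_mul_le _ _).trans <| by
    rw [mul_comm]; gcongr; exact norm_pow_le q (n + 1)

variable [CompleteSpace R]

lemma multipliable_one_sub_pow_succ_mul {q : R} (hq : ‖q‖ < 1) (c : R) :
    Multipliable fun n : ℕ ↦ 1 - q ^ (n + 1) * c := by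
  simp_rw [sub_eq_add_neg]
  refine multipliable_one_add_of_summable <| Summable.of_nonneg_of_le (fun _ ↦ norm_nonneg _)
    (fun n ↦ (norm_neg (q ^ (n + 1) * c)).trans_le (norm_pow_succ_mul_le q c n)) ?_
  exact (summable_geometric_of_lt_one (norm_nonneg q) hq).mul_left (‖c‖ * ‖q‖) |>.congr
    fun n ↦ by ring

lemma tendsto_tprod_one_sub_pow_succ_mul (c : R) :
    Tendsto (fun q : R ↦ ∏' n : ℕ, (1 - q ^ (n + 1) * c)) (𝓝 0) (𝓝 1) := by
  have h := tendsto_tprod_one_add_of_dominated_convergence (𝓕 := 𝓝 (0 : R)) (g := 0)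
    (f := fun q n ↦ -(q ^ (n + 1) * c)) (bound := fun n ↦ ‖c‖ * (1 / 2) ^ (n + 1))
    ((summable_geometric_two.mul_left (‖c‖ / 2)).congr fun n ↦ by ring)
    (fun n ↦ (by fun_prop : Continuous fun q : R ↦ -(q ^ (n + 1) * c)).tendsto' 0 0 (by simp))
    ?_
  · simpa [sub_eq_add_neg] using h
  · filter_upwards [Metric.ball_mem_nhds (0 : R) (by norm_num : (0 : ℝ) < 1 / 2)] with q hq n
    rw [norm_neg]
    refine (norm_pow_succ_mul_le q c n).trans ?_
    gcongr
    exact (mem_ball_zero_iff.mp hq).le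

lemma tendsto_tprod_jacobi_factors (a b : R) :
    Tendsto (fun q : R ↦ ∏' n : ℕ,
        (1 - q ^ (n + 1)) * (1 - q ^ (n + 1) * a) * (1 - q ^ (n + 1) * b)) (𝓝 0) (𝓝 1) := by
  have hsplit : ∀ᶠ q : R in 𝓝 0, (∏' n : ℕ,
      (1 - q ^ (n + 1)) * (1 - q ^ (n + 1) * a) * (1 - q ^ (n + 1) * b)) =
      (∏' n : ℕ, (1 - q ^ (n + 1))) * (∏' n : ℕ, (1 - q ^ (n + 1) * a)) *
        ∏' n : ℕ, (1 - q ^ (n + 1) * b) := by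
    filter_upwards [Metric.ball_mem_nhds (0 : R) one_pos] with q hq
    have hq : ‖q‖ < 1 := mem_ball_zero_iff.mp hq
    have h1 := multipliable_one_sub_pow_succ_mul hq 1
    simp only [mul_one] at h1
    have ha := multipliable_one_sub_pow_succ_mul hq a
    rw [(h1.mul ha).tprod_mul (multipliable_one_sub_pow_succ_mul hq b), h1.tprod_mul ha]
  refine Tendsto.congr' (EventuallyEq.symm hsplit) ?_
  simpa using ((tendsto_tprod_one_sub_pow_succ_mul (1 : R)).mul
    (tendsto_tprod_one_sub_pow_succ_mul a)).mul (tendsto_tprod_one_sub_pow_succ_mul b)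

end InfiniteProducts

lemma mul_mul_div_mul_mul_of_mul_eq {K : Type*} [Field K] {a b c d : K} (h : a * b = c * d)
    (hcd : c * d ≠ 0) (p q r s : K) : a * p * (b * q) / (c * r * (d * s)) = p * q / (r * s) := by
  rw [mul_mul_mul_comm, mul_mul_mul_comm c, h, mul_div_mul_left _ _ hcd]

lemma mul_inv_sub_one_ratio_eq {K : Type*} [Field K] {X U V : K} (hX : X ≠ 0) (hU : U ≠ 0)
    (hV : V ≠ 0) : (X * V⁻¹ - 1) * (U⁻¹ - 1) / ((X * U⁻¹ - 1) * (V⁻¹ - 1)) =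
      (U - 1) * (1 - V * X⁻¹) / ((V - 1) * (1 - U * X⁻¹)) := by
  rw [mul_comm (U - 1), mul_comm (V - 1), ← mul_mul_div_mul_mul_of_mul_eq
    (a := X * V⁻¹) (b := -U⁻¹) (c := X * U⁻¹) (d := -V⁻¹) (by ring) (by simp [*])
    (1 - V * X⁻¹) (U - 1) (1 - U * X⁻¹) (V - 1)]
  congr 1 <;> field_simp <;> ring

lemma two_mul_sin_eq_neg_I_mul_exp (t : ℂ) :
    2 * Complex.sin t = -I * cexp (-(t * I)) * (cexp (2 * t * I) - 1) := by
  have h : cexp (-(t * I)) * cexp (2 * t * I) = cexp (t * I) := by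
    rw [← Complex.exp_add]; ring_nf
  rw [Complex.sin, neg_mul]
  linear_combination I * h

lemma tendsto_cexp_two_pi_I_mul_comap_im_atTop :
    Tendsto (fun τ : ℂ ↦ cexp (2 * π * I * τ)) (comap im atTop) (𝓝 0) :=
  ((Function.Periodic.qParam_tendsto zero_lt_one).mono_right nhdsWithin_le_nhds).congr
    fun τ ↦ by simp [Function.Periodic.qParam]

noncomputable def jacobiThetaTail (w τ : ℂ) : ℂ :=
  ∏' l : ℕ, (1 - cexp (2 * π * I * τ) ^ (l + 1)) *
    (1 - cexp (2 * π * I * τ) ^ (l + 1) * cexp (2 * π * I * w)) *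
    (1 - cexp (2 * π * I * τ) ^ (l + 1) * cexp (-(2 * π * I * w)))

lemma tendsto_jacobiThetaTail (w : ℂ) :
    Tendsto (jacobiThetaTail w) (comap im atTop) (𝓝 1) :=
  (tendsto_tprod_jacobi_factors _ _).comp tendsto_cexp_two_pi_I_mul_comap_im_atTop

lemma jacobiThetaProd_eq (w τ : ℂ) : jacobiThetaProd w τ =
    -I * cexp (π * I * τ / 4) * cexp (-(π * I * w)) *
      ((cexp (2 * π * I * w) - 1) * jacobiThetaTail w τ) := by
  rw [jacobiThetaProd, jacobiThetaTail, two_mul_sin_eq_neg_I_mul_exp]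
  ring_nf

lemma tendsto_jacobiThetaProd_ratio {w₁ w₂ w₃ w₄ : ℂ} (h : w₁ + w₂ = w₃ + w₄) :
    Tendsto (fun τ ↦ jacobiThetaProd w₁ τ * jacobiThetaProd w₂ τ /
        (jacobiThetaProd w₃ τ * jacobiThetaProd w₄ τ)) (comap im atTop)
      (𝓝 ((cexp (2 * π * I * w₁) - 1) * (cexp (2 * π * I * w₂) - 1) /
        ((cexp (2 * π * I * w₃) - 1) * (cexp (2 * π * I * w₄) - 1)))) := by
  have hprefactor : cexp (-(π * I * w₁)) * cexp (-(π * I * w₂)) =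
      cexp (-(π * I * w₃)) * cexp (-(π * I * w₄)) := by
    rw [← Complex.exp_add, ← Complex.exp_add]
    congr 1
    linear_combination (-(π * I)) * h
  have hratio (τ : ℂ) : jacobiThetaProd w₁ τ * jacobiThetaProd w₂ τ /
      (jacobiThetaProd w₃ τ * jacobiThetaProd w₄ τ) =
      (cexp (2 * π * I * w₁) - 1) * (cexp (2 * π * I * w₂) - 1) /
        ((cexp (2 * π * I * w₃) - 1) * (cexp (2 * π * I * w₄) - 1)) *
      (jacobiThetaTail w₁ τ * jacobiThetaTail w₂ τ /
        (jacobiThetaTail w₃ τ * jacobiThetaTail w₄ τ)) := by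
    rw [jacobiThetaProd_eq, jacobiThetaProd_eq, jacobiThetaProd_eq, jacobiThetaProd_eq,
      mul_mul_div_mul_mul_of_mul_eq
        (by linear_combination (-I * cexp (π * I * τ / 4)) ^ 2 * hprefactor)
        (by simp [Complex.exp_ne_zero]),
      mul_mul_mul_comm, mul_mul_mul_comm (cexp (2 * π * I * w₃) - 1), mul_div_mul_comm]
  have htail : Tendsto (fun τ ↦ jacobiThetaTail w₁ τ * jacobiThetaTail w₂ τ /
      (jacobiThetaTail w₃ τ * jacobiThetaTail w₄ τ)) (comap im atTop) (𝓝 1) := by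
    have hlim := ((tendsto_jacobiThetaTail w₁).mul (tendsto_jacobiThetaTail w₂)).div
      ((tendsto_jacobiThetaTail w₃).mul (tendsto_jacobiThetaTail w₄)) (by norm_num)
    rwa [mul_one, div_one] at hlim
  simpa only [hratio, mul_one] using htail.const_mul _

lemma cexp_two_pi_I_mul_div_sub (x w : ℂ) :
    cexp (2 * π * I * (x / (2 * π * I) - w)) = cexp x * (cexp (2 * π * I * w))⁻¹ := by
  rw [← Complex.exp_neg, ← Complex.exp_add]
  congr 1
  field_simp [Real.pi_ne_zero, I_ne_zero]
  ring

lemma cexp_two_pi_I_mul_neg (w : ℂ) : cexp (2 * π * I * -w) = (cexp (2 * π * I * w))⁻¹ := by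
  rw [← Complex.exp_neg, mul_neg]

theorem Psi_limit_general (α : ℝ) (x z : ℂ) :
    Filter.Tendsto (fun τ : ℂ => PsiFun x α z τ)
      (Filter.comap Complex.im Filter.atTop)
      (nhds ((Complex.exp (2 * (π : ℂ) * I * z) - 1) *
          (1 - Complex.exp (2 * (π : ℂ) * I * ((α : ℂ) + 1) * z) * Complex.exp (-x)) /
        ((Complex.exp (2 * (π : ℂ) * I * ((α : ℂ) + 1) * z) - 1) *
          (1 - Complex.exp (2 * (π : ℂ) * I * z) * Complex.exp (-x))))) := by
  have hratio := tendsto_jacobiThetaProd_ratio (w₁ := x / (2 * π * I) - (α + 1) * z) (w₂ := -z)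
    (w₃ := x / (2 * π * I) - z) (w₄ := -((α + 1) * z)) (by ring)
  rw [cexp_two_pi_I_mul_div_sub, cexp_two_pi_I_mul_div_sub, cexp_two_pi_I_mul_neg,
    cexp_two_pi_I_mul_neg, mul_inv_sub_one_ratio_eq (Complex.exp_ne_zero x) (Complex.exp_ne_zero _)
    (Complex.exp_ne_zero _)] at hratio
  rw [Complex.exp_neg, mul_assoc (2 * π * I) _ z]
  exact hratio

/-- The `q → 0` limit of the exceptional-divisor factor `Ψ`: with `u = e^{2πiz}` and
`u^{α+1} = e^{2πi(α+1)z}`, as `Im τ → +∞`,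
`Ψ(x,α,z,τ) → (u−1)(1−u^{α+1}e^{−x})/((u^{α+1}−1)(1−u·e^{−x}))`. -/
theorem Psi_limit (α : ℝ) (x z : ℂ)
    (hu : Complex.exp (2 * (π : ℂ) * I * z) ≠ 1)
    (hua : Complex.exp (2 * (π : ℂ) * I * ((α : ℂ) + 1) * z) ≠ 1)
    (hx1 : Complex.exp x ≠ Complex.exp (2 * (π : ℂ) * I * z))
    (hx2 : Complex.exp x ≠ Complex.exp (2 * (π : ℂ) * I * ((α : ℂ) + 1) * z)) :
    Filter.Tendsto (fun τ : ℂ => PsiFun x α z τ)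
      (Filter.comap Complex.im Filter.atTop)
      (nhds ((Complex.exp (2 * (π : ℂ) * I * z) - 1) *
          (1 - Complex.exp (2 * (π : ℂ) * I * ((α : ℂ) + 1) * z) * Complex.exp (-x)) /
        ((Complex.exp (2 * (π : ℂ) * I * ((α : ℂ) + 1) * z) - 1) *
          (1 - Complex.exp (2 * (π : ℂ) * I * z) * Complex.exp (-x))))) :=
  Psi_limit_general α x z
end
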